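/- arXiv:0901.1653 — 3 statements merged into one kernel-verified Lean document; each statement's English description precedes it below -/
import Mathlib

section
/- (Grauert–Hironaka formal division theorem.) Let A be a commutative unital integral domain and F_1,…,F_t nonzero elements of A[[X_1,…,X_n]]. Let β^i = ν(F_i) be the initial exponent of F_i and a_i = Init(F_i) the coefficient of the initial monomial of F_i. Let S be the multiplicatively closed subset of A generated by the a_i, i.e. S = {a_1^{m_1} ⋯ a_t^{m_t} : m_i ∈ ℕ}. Then every element F of A[[X]] (or of S^{-1}A[[X]]) can be written in a unique way as F = Σ_{1≤i≤t} D_i F_i + R with D_i, R ∈ S^{-1}A[[X]], Supp(R) ⊂ Δ̄ and Supp(D_i) + β^i ⊂ Δ_i, where Δ = ∪_{1≤i≤t}(β^i + ℕ^n), Δ̄ = ℕ^n − Δ and Δ_i = (β^i + ℕ^n) − ∪_{k<i}(β^k + ℕ^n). -/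
/-!
An admissible pair `(D, R)` is the same thing as one coefficient family `c : ℕⁿ → L`: `c γ` is
the coefficient of `Dᵢ` at `γ - βⁱ` when `γ ∈ Δᵢ` and the coefficient of `R` at `γ` when `γ ∈ Δ̄`.
In terms of `c`, the coefficient of `∑ Dᵢ Fᵢ + R` at `γ` is `c γ` times the initial coefficient
`aᵢ` (or `1` on `Δ̄`) plus a combination of values of `c` at exponents strictly below `γ`: every
other monomial of `Fᵢ` lies above `βⁱ`, and the order is compatible with addition. Since the order
is a well-order and the `aᵢ` are invertible in `S⁻¹A`, this triangular system has exactly one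
solution.
-/

open scoped ENNReal

noncomputable section

/-- The total order on `ℕ^n` given by the lexicographic order on `(|α|, α₁, …, α_n)`. -/
def degLt {n : ℕ} (α β : Fin n →₀ ℕ) : Prop :=
  (∑ k, α k) < (∑ k, β k) ∨
    ((∑ k, α k) = (∑ k, β k) ∧ ∃ j : Fin n, (∀ k, k < j → α k = β k) ∧ α j < β j)

/-- `β` is the initial exponent `ν(f)` of `f`: the coefficient at `β` is nonzero and all
coefficients at smaller exponents vanish. -/
def hasInitExp {n : ℕ} {R : Type*} [Semiring R] (f : MvPowerSeries (Fin n) R)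
    (β : Fin n →₀ ℕ) : Prop :=
  MvPowerSeries.coeff β f ≠ 0 ∧ ∀ γ, degLt γ β → MvPowerSeries.coeff γ f = 0

/-- The support of a formal power series. -/
def psSupport {n : ℕ} {R : Type*} [Semiring R] (f : MvPowerSeries (Fin n) R) :
    Set (Fin n →₀ ℕ) :=
  {γ | MvPowerSeries.coeff γ f ≠ 0}

namespace FormalDivision

variable {n t : ℕ}

lemma degLt_iff_toLex {α β : Fin n →₀ ℕ} :
    degLt α β ↔ toLex ((∑ k, α k), toLex ⇑α) < toLex ((∑ k, β k), toLex ⇑β) := by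
  rw [Prod.Lex.lt_iff]; exact Iff.rfl

lemma wellFounded_degLt : WellFounded (degLt (n := n)) :=
  Subrelation.wf degLt_iff_toLex.1 (InvImage.wf _ wellFounded_lt)

lemma degLt_or_degLt_of_ne {α β : Fin n →₀ ℕ} (h : α ≠ β) : degLt α β ∨ degLt β α := by
  simp only [degLt_iff_toLex]
  refine lt_or_gt_of_ne fun e => h (DFunLike.coe_injective ?_)
  exact congrArg (fun p => ofLex (ofLex p).2) e

lemma degLt_add_right {α β : Fin n →₀ ℕ} (γ : Fin n →₀ ℕ) (h : degLt α β) :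
    degLt (α + γ) (β + γ) := by
  unfold degLt at h ⊢
  simp only [Finsupp.add_apply, Finset.sum_add_distrib]
  rcases h with h | ⟨he, j, hj, hlt⟩
  · exact Or.inl (by omega)
  · exact Or.inr ⟨by omega, j, fun k hk => by rw [hj k hk], by omega⟩

open Classical in
theorem existsUnique_of_triangular {α L : Type*} [Ring L] {r : α → α → Prop}
    (hr : WellFounded r) (u : α → L) (hu : ∀ a, IsUnit (u a)) (T : (α → L) → α → L)
    (hT : ∀ c c' a, (∀ b, r b a → c b = c' b) → T c a = T c' a) (g : α → L) :
    ∃! c : α → L, ∀ a, c a * u a + T c a = g a := by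
  set c : α → L := hr.fix fun a prev =>
    (g a - T (fun b => if h : r b a then prev b h else 0) a) * ↑(hu a).unit⁻¹
  have hcu : ∀ a, c a * u a = g a - T c a := fun a => by
    rw [show c a = _ from hr.fix_eq _ a, hT _ c a fun b hb => dif_pos hb, mul_assoc,
      IsUnit.val_inv_mul, mul_one]
  refine ⟨c, fun a => by rw [hcu a, sub_add_cancel], fun c' hc' => funext fun a => ?_⟩
  induction a using hr.induction with
  | _ a IH =>
    have hlow : T c' a = T c a := hT c' c a IH
    rw [← (hu a).mul_left_inj, hcu a, ← hc' a, hlow, add_sub_cancel_right]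

section Delta

variable (β : Fin t → (Fin n →₀ ℕ))

def delta : Set (Fin n →₀ ℕ) := {γ | ∃ i, β i ≤ γ}

def deltaPart (i : Fin t) : Set (Fin n →₀ ℕ) := {γ | β i ≤ γ ∧ ∀ k < i, ¬ β k ≤ γ}

variable {β}

lemma mem_delta_iff {γ : Fin n →₀ ℕ} : γ ∈ delta β ↔ ∃ i δ, γ = β i + δ := by
  simp only [delta, Set.mem_ofPred_eq, le_iff_exists_add]

lemma mem_deltaPart_iff {i : Fin t} {γ : Fin n →₀ ℕ} :
    γ ∈ deltaPart β i ↔ (∃ δ, γ = β i + δ) ∧ ∀ k < i, ¬∃ δ, γ = β k + δ := by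
  simp only [deltaPart, Set.mem_ofPred_eq, le_iff_exists_add]

lemma mem_delta_of_mem_deltaPart {i : Fin t} {γ : Fin n →₀ ℕ} (h : γ ∈ deltaPart β i) :
    γ ∈ delta β :=
  ⟨i, h.1⟩

lemma eq_of_mem_deltaPart {i j : Fin t} {γ : Fin n →₀ ℕ} (hi : γ ∈ deltaPart β i)
    (hj : γ ∈ deltaPart β j) : i = j := by
  rcases lt_trichotomy i j with h | h | h
  · exact absurd hi.1 (hj.2 i h)
  · exact h
  · exact absurd hj.1 (hi.2 j h)

lemma exists_mem_deltaPart {γ : Fin n →₀ ℕ} (h : γ ∈ delta β) : ∃ i, γ ∈ deltaPart β i := by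
  obtain ⟨i, hi, hmin⟩ := wellFounded_lt.has_min {i | β i ≤ γ} h
  exact ⟨i, hi, fun k hk hle => hmin k hle hk⟩

def deltaIdx {γ : Fin n →₀ ℕ} (h : γ ∈ delta β) : Fin t := (exists_mem_deltaPart h).choose

lemma mem_deltaPart_deltaIdx {γ : Fin n →₀ ℕ} (h : γ ∈ delta β) :
    γ ∈ deltaPart β (deltaIdx h) :=
  (exists_mem_deltaPart h).choose_spec

end Delta

section Series

open MvPowerSeries

variable {L : Type*} [Ring L] (β : Fin t → (Fin n →₀ ℕ))

open Classical in
def quot (c : (Fin n →₀ ℕ) → L) (i : Fin t) : MvPowerSeries (Fin n) L :=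
  fun δ => if δ + β i ∈ deltaPart β i then c (δ + β i) else 0

open Classical in
def rem (c : (Fin n →₀ ℕ) → L) : MvPowerSeries (Fin n) L :=
  fun γ => if γ ∈ delta β then 0 else c γ

open Classical in
def flatten (D : Fin t → MvPowerSeries (Fin n) L) (R : MvPowerSeries (Fin n) L) :
    (Fin n →₀ ℕ) → L :=
  fun γ => if h : γ ∈ delta β then coeff (γ - β (deltaIdx h)) (D (deltaIdx h)) else coeff γ R

open Classical in
lemma coeff_quot (c : (Fin n →₀ ℕ) → L) (i : Fin t) (δ : Fin n →₀ ℕ) :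
    coeff δ (quot β c i) = if δ + β i ∈ deltaPart β i then c (δ + β i) else 0 :=
  rfl

open Classical in
lemma coeff_rem (c : (Fin n →₀ ℕ) → L) (γ : Fin n →₀ ℕ) :
    coeff γ (rem β c) = if γ ∈ delta β then 0 else c γ :=
  rfl

open Classical in
def pivot (a : Fin t → L) (γ : Fin n →₀ ℕ) : L :=
  if h : γ ∈ delta β then a (deltaIdx h) else 1

variable {β}

lemma add_mem_deltaPart_of_mem_psSupport_quot {c : (Fin n →₀ ℕ) → L} {i : Fin t}
    {δ : Fin n →₀ ℕ} (h : δ ∈ psSupport (quot β c i)) : δ + β i ∈ deltaPart β i := by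
  by_contra hδ
  exact h (by rw [coeff_quot, if_neg hδ])

lemma psSupport_rem_subset (c : (Fin n →₀ ℕ) → L) : psSupport (rem β c) ⊆ (delta β)ᶜ :=
  fun γ h hγ => h (by rw [coeff_rem, if_pos hγ])

lemma quot_flatten {D : Fin t → MvPowerSeries (Fin n) L} (R : MvPowerSeries (Fin n) L)
    (hD : ∀ i, ∀ δ ∈ psSupport (D i), δ + β i ∈ deltaPart β i) (i : Fin t) :
    quot β (flatten β D R) i = D i := by
  ext δ
  rw [coeff_quot]
  split_ifs with hδ
  · have hmem := mem_delta_of_mem_deltaPart hδ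
    have hi : deltaIdx hmem = i := eq_of_mem_deltaPart (mem_deltaPart_deltaIdx hmem) hδ
    rw [flatten, dif_pos hmem, hi, add_tsub_cancel_right]
  · by_contra hne
    exact hδ (hD i δ (Ne.symm hne))

lemma rem_flatten (D : Fin t → MvPowerSeries (Fin n) L) {R : MvPowerSeries (Fin n) L}
    (hR : psSupport R ⊆ (delta β)ᶜ) : rem β (flatten β D R) = R := by
  ext γ
  rw [coeff_rem]
  split_ifs with hγ
  · by_contra hne
    exact hR (Ne.symm hne) hγ
  · rw [flatten, dif_neg hγ]

lemma isUnit_pivot {a : Fin t → L} (ha : ∀ i, IsUnit (a i)) (γ : Fin n →₀ ℕ) :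
    IsUnit (pivot β a γ) := by
  unfold pivot
  split_ifs
  exacts [ha _, isUnit_one]

lemma coeff_sum_quot_mul_monomial_add_rem (a : Fin t → L) (c : (Fin n →₀ ℕ) → L)
    (γ : Fin n →₀ ℕ) :
    coeff γ (∑ i, quot β c i * monomial (β i) (a i) + rem β c) = c γ * pivot β a γ := by
  classical
  have hterm : ∀ i, coeff γ (quot β c i * monomial (β i) (a i))
      = if γ ∈ deltaPart β i then c γ * a i else 0 := by
    intro i
    rw [coeff_mul_monomial]
    by_cases hle : β i ≤ γ
    · rw [if_pos hle, coeff_quot, tsub_add_cancel_of_le hle]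
      split_ifs <;> simp only [zero_mul]
    · rw [if_neg hle, if_neg fun h => hle h.1]
  rw [map_add, map_sum, Finset.sum_congr rfl fun i _ => hterm i, coeff_rem, pivot]
  by_cases hγ : γ ∈ delta β
  · rw [dif_pos hγ, if_pos hγ, add_zero, Finset.sum_eq_single (deltaIdx hγ),
      if_pos (mem_deltaPart_deltaIdx hγ)]
    · exact fun i _ hi => if_neg fun h => hi (eq_of_mem_deltaPart h (mem_deltaPart_deltaIdx hγ))
    · exact fun h => absurd (Finset.mem_univ _) h
  · rw [dif_neg hγ, if_neg hγ, mul_one, add_eq_right]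
    exact Finset.sum_eq_zero fun i _ => if_neg fun h => hγ (mem_delta_of_mem_deltaPart h)

variable (β) (F : Fin t → MvPowerSeries (Fin n) L)

def tail (i : Fin t) : MvPowerSeries (Fin n) L :=
  F i - monomial (β i) (coeff (β i) (F i))

def lower (c : (Fin n →₀ ℕ) → L) (γ : Fin n →₀ ℕ) : L :=
  ∑ i, coeff γ (quot β c i * tail β F i)

variable {β F}

lemma coeff_sum_quot_mul_add_rem (c : (Fin n →₀ ℕ) → L) (γ : Fin n →₀ ℕ) :
    coeff γ (∑ i, quot β c i * F i + rem β c)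
      = c γ * pivot β (fun i => coeff (β i) (F i)) γ + lower β F c γ := by
  have hsplit : ∀ i, quot β c i * F i
      = quot β c i * monomial (β i) (coeff (β i) (F i)) + quot β c i * tail β F i := by
    intro i
    rw [tail, ← mul_add, add_sub_cancel]
  rw [Finset.sum_congr rfl fun i _ => hsplit i, Finset.sum_add_distrib, add_right_comm,
    map_add, coeff_sum_quot_mul_monomial_add_rem, lower, map_sum]

lemma degLt_of_coeff_tail_ne_zero (hinit : ∀ i γ, degLt γ (β i) → coeff γ (F i) = 0)
    {i : Fin t} {γ : Fin n →₀ ℕ} (h : coeff γ (tail β F i) ≠ 0) : degLt (β i) γ := by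
  rw [tail, map_sub, coeff_monomial] at h
  split_ifs at h with hγ
  · exact absurd (by rw [hγ, sub_self]) h
  · rcases degLt_or_degLt_of_ne hγ with hlt | hlt
    · exact absurd (by rw [hinit i γ hlt, sub_zero]) h
    · exact hlt

lemma lower_congr (hinit : ∀ i γ, degLt γ (β i) → coeff γ (F i) = 0)
    {c c' : (Fin n →₀ ℕ) → L} {γ : Fin n →₀ ℕ} (h : ∀ γ', degLt γ' γ → c γ' = c' γ') :
    lower β F c γ = lower β F c' γ := by
  refine Finset.sum_congr rfl fun i _ => ?_
  rw [coeff_mul, coeff_mul]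
  refine Finset.sum_congr rfl fun p hp => ?_
  by_cases htail : coeff p.2 (tail β F i) = 0
  · rw [htail, mul_zero, mul_zero]
  · have hlt := degLt_add_right p.1 (degLt_of_coeff_tail_ne_zero hinit htail)
    rw [add_comm (β i), add_comm p.2, Finset.HasAntidiagonal.mem_antidiagonal.1 hp] at hlt
    rw [coeff_quot, coeff_quot, h _ hlt]

theorem existsUnique_division (hinit : ∀ i γ, degLt γ (β i) → coeff γ (F i) = 0)
    (hunit : ∀ i, IsUnit (coeff (β i) (F i))) (G : MvPowerSeries (Fin n) L) :
    ∃! DR : (Fin t → MvPowerSeries (Fin n) L) × MvPowerSeries (Fin n) L,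
      G = ∑ i, DR.1 i * F i + DR.2 ∧ psSupport DR.2 ⊆ (delta β)ᶜ ∧
        ∀ i, ∀ δ ∈ psSupport (DR.1 i), δ + β i ∈ deltaPart β i := by
  obtain ⟨c, hc, hc_unique⟩ := existsUnique_of_triangular wellFounded_degLt _
    (isUnit_pivot hunit) (lower β F) (fun _ _ _ h => lower_congr hinit h) (coeff · G)
  have hsolves : ∀ c', G = ∑ i, quot β c' i * F i + rem β c' ↔
      ∀ γ, c' γ * pivot β (fun i => coeff (β i) (F i)) γ + lower β F c' γ = coeff γ G := by
    intro c'
    simp only [MvPowerSeries.ext_iff, coeff_sum_quot_mul_add_rem, eq_comm]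
  refine ⟨(quot β c, rem β c), ⟨(hsolves c).2 hc, psSupport_rem_subset c,
    fun i δ => add_mem_deltaPart_of_mem_psSupport_quot⟩, ?_⟩
  rintro ⟨D, R⟩ ⟨hG, hR, hD⟩
  have hDR : (D, R) = (quot β (flatten β D R), rem β (flatten β D R)) :=
    Prod.ext (funext fun i => (quot_flatten R hD i).symm) (rem_flatten D hR).symm
  have hflat : flatten β D R = c := hc_unique _ ((hsolves _).1 (by rwa [hDR] at hG))
  rw [hDR, hflat]

end Series

end FormalDivision

theorem stmt_4_general {A : Type*} [CommRing A] (n t : ℕ)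
    (F : Fin t → MvPowerSeries (Fin n) A)
    (β : Fin t → (Fin n →₀ ℕ)) (hβ : ∀ i, hasInitExp (F i) (β i))
    (S : Submonoid A)
    (hS : S = Submonoid.closure (Set.range fun i => MvPowerSeries.coeff (β i) (F i)))
    (G : MvPowerSeries (Fin n) (Localization S)) :
    ∃! DR : (Fin t → MvPowerSeries (Fin n) (Localization S)) ×
        MvPowerSeries (Fin n) (Localization S),
      G = (∑ i, DR.1 i * MvPowerSeries.map (algebraMap A (Localization S)) (F i))
          + DR.2 ∧
      (∀ γ ∈ psSupport DR.2, ¬∃ (i : Fin t) (δ : Fin n →₀ ℕ), γ = β i + δ) ∧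
      (∀ i : Fin t, ∀ γ ∈ psSupport (DR.1 i),
        (∃ δ : Fin n →₀ ℕ, γ + β i = β i + δ) ∧
          ∀ k : Fin t, k < i → ¬∃ δ : Fin n →₀ ℕ, γ + β i = β k + δ) := by
  have hinit : ∀ i γ, degLt γ (β i) →
      MvPowerSeries.coeff γ (MvPowerSeries.map (algebraMap A (Localization S)) (F i)) = 0 :=
    fun i γ hγ => by rw [MvPowerSeries.coeff_map, (hβ i).2 γ hγ, map_zero]
  have hunit : ∀ i, IsUnit (MvPowerSeries.coeff (β i)
      (MvPowerSeries.map (algebraMap A (Localization S)) (F i))) := fun i => by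
    rw [MvPowerSeries.coeff_map]
    exact IsLocalization.map_units _ (⟨_, hS ▸ Submonoid.subset_closure ⟨i, rfl⟩⟩ : S)
  refine (existsUnique_congr fun DR => ?_).1 (FormalDivision.existsUnique_division hinit hunit G)
  simp only [Set.subset_def, Set.mem_compl_iff, FormalDivision.mem_delta_iff,
    FormalDivision.mem_deltaPart_iff]

/-- Grauert–Hironaka formal division. Let `A` be an integral domain,
`F₁, …, F_t` nonzero power series with initial exponents `βⁱ` and initial coefficients
`aᵢ`, and `S` the multiplicative set generated by the `aᵢ`. Every `F ∈ S⁻¹A[[X]]` (in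
particular every `F ∈ A[[X]]`) has a unique expression `F = Σᵢ Dᵢ·Fᵢ + R` with
`Supp R ⊆ Δ̄` and `Supp Dᵢ + βⁱ ⊆ Δᵢ`. -/
theorem stmt_4 {A : Type*} [CommRing A] [IsDomain A] (n t : ℕ)
    (F : Fin t → MvPowerSeries (Fin n) A) (hF : ∀ i, F i ≠ 0)
    (β : Fin t → (Fin n →₀ ℕ)) (hβ : ∀ i, hasInitExp (F i) (β i))
    (S : Submonoid A)
    (hS : S = Submonoid.closure (Set.range fun i => MvPowerSeries.coeff (β i) (F i)))
    (G : MvPowerSeries (Fin n) (Localization S)) :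
    ∃! DR : (Fin t → MvPowerSeries (Fin n) (Localization S)) ×
        MvPowerSeries (Fin n) (Localization S),
      G = (∑ i, DR.1 i * MvPowerSeries.map (algebraMap A (Localization S)) (F i))
          + DR.2 ∧
      (∀ γ ∈ psSupport DR.2, ¬∃ (i : Fin t) (δ : Fin n →₀ ℕ), γ = β i + δ) ∧
      (∀ i : Fin t, ∀ γ ∈ psSupport (DR.1 i),
        (∃ δ : Fin n →₀ ℕ, γ + β i = β i + δ) ∧
          ∀ k : Fin t, k < i → ¬∃ δ : Fin n →₀ ℕ, γ + β i = β k + δ) :=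
  stmt_4_general n t F β hβ S hS G

end
end

section
/- Let (A, m) be a Noetherian local ring, I an m-primary ideal, g_1,…,g_n ∈ I and h ∈ m such that K = (g_1,…,g_n, h) is a joint reduction of I^{[n]}, m, i.e. there is k ∈ ℕ* with ((g_1,…,g_n)I^{n−1}m + h·I^n)·(I^n m)^k = I^{n(k+1)} m^{k+1}. Set A' = A/(h), with maximal ideal m', J' = (g_1,…,g_n)·A' and I' = I·A'. Then J' is a reduction of I', i.e. J' ⊂ I' ⊂ J̄' (equivalently J' I'^k = I'^{k+1} for some k), and for every rank-one discrete valuation v on A' one has v(J') = v(I'). -/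
open Filter IsLocalRing
open scoped ENNReal NNReal

noncomputable section

/-- `ord_I(x) = max {m : x ∈ I^m}` (with value `⊤` for `x = 0`). -/
def adicOrder {A : Type*} [CommRing A] (I : Ideal A) (x : A) : ℕ∞ :=
  ⨆ n ∈ {n : ℕ | x ∈ I ^ n}, (n : ℕ∞)

/-- The asymptotic Samuel function `v̄_I(x) = lim_k ord_I(x^k)/k`. -/
def samuelFn {A : Type*} [CommRing A] (I : Ideal A) (x : A) : ℝ≥0∞ :=
  Filter.limsup (fun k : ℕ => (adicOrder I (x ^ k) : ℝ≥0∞) / (k : ℝ≥0∞)) Filter.atTop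

/-- `v̄_I(J) = min_{x ∈ J} v̄_I(x)`. -/
def samuelIdeal {A : Type*} [CommRing A] (I J : Ideal A) : ℝ≥0∞ :=
  ⨅ x ∈ J, samuelFn I x

/-- Length of a module, as the Krull dimension of its submodule lattice. -/
def moduleLength (R M : Type*) [Ring R] [AddCommGroup M] [Module R M] : ℝ≥0∞ :=
  (((Order.krullDim (Submodule R M)).unbotD 0 : ℕ∞) : ℝ≥0∞)

/-- Hilbert–Samuel multiplicity (normalized in degree `d`) of a module w.r.t. an ideal:
`e(I; M) = lim_t d! · ℓ(M/I^tM) / t^d`. -/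
def multMod {A : Type*} [CommRing A] (d : ℕ) (I : Ideal A) (M : Type*) [AddCommGroup M]
    [Module A M] : ℝ≥0∞ :=
  Filter.limsup (fun t : ℕ =>
    (Nat.factorial d : ℝ≥0∞) * moduleLength A (M ⧸ (I ^ t • (⊤ : Submodule A M))) /
      (t : ℝ≥0∞) ^ d) Filter.atTop

/-- Hilbert–Samuel multiplicity `e(I)` (in dimension `d`). -/
def hsMult {A : Type*} [CommRing A] (d : ℕ) (I : Ideal A) : ℝ≥0∞ :=
  multMod d I A

/-- `c` is the generic value of `(v̄_{I·A_H}(m_H))⁻¹` as `H` ranges over a dense Zariski-open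
set of `i`-planes, an `i`-plane `H` being cut out by `n+1-i` generic linear forms in the fixed
regular system of parameters `X`. -/
def IsGenericLojExponent {A : Type*} [CommRing A] [IsLocalRing A] (n : ℕ)
    (X : Fin (n + 1) → A) (I : Ideal A) (i : ℕ) (c : ℝ≥0∞) : Prop :=
  ∃ P : MvPolynomial (Fin (n + 1 - i) × Fin (n + 1)) (ResidueField A), P ≠ 0 ∧
    ∀ a : Fin (n + 1 - i) → Fin (n + 1) → A,
      MvPolynomial.eval (fun p => residue A (a p.1 p.2)) P ≠ 0 →
      (samuelIdeal
        (I.map (Ideal.Quotient.mk (Ideal.span (Set.range fun j => ∑ k, a j k * X k))))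
        ((maximalIdeal A).map
          (Ideal.Quotient.mk (Ideal.span (Set.range fun j => ∑ k, a j k * X k)))))⁻¹ = c

/-- The integral closure of an ideal: elements satisfying a relation of integral dependence
`x^d + c₁x^{d-1} + ⋯ + c_d = 0` with `cᵢ ∈ Iⁱ`. -/
def intClosure {A : Type*} [CommRing A] (I : Ideal A) : Set A :=
  {x | ∃ d : ℕ, 0 < d ∧ ∃ c : ℕ → A, (∀ i, c i ∈ I ^ i) ∧
    x ^ d + ∑ i ∈ Finset.range d, c (i + 1) * x ^ (d - (i + 1)) = 0}

/-- `ord_J(I) = min_{x ∈ I} ord_J(x) = max {k : I ⊆ J^k}`. -/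
def adicOrderIdeal {A : Type*} [CommRing A] (J I : Ideal A) : ℕ∞ :=
  ⨆ k ∈ {k : ℕ | I ≤ J ^ k}, (k : ℕ∞)

end


/-!
Modulo `h` the joint-reduction equation becomes `J'·K = I'·K` with `K = I'^{n-1} m' (I'^n m')^k`,
and since `K ⊇ I'^c` this gives `I'^{p+c} ⊆ J'^p` for every `p`. This uniform containment yields
each conclusion. The shifted `I'`-adic filtration lies below the stable `J'`-adic one, so it is
stable by Artin–Rees, i.e. `J'` is a reduction of `I'`. The Rees algebra of `I'` lies in a finite
module over that of `J'`, so `x·T` is integral over `A'[J'T]`, and the coefficient of the top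
power of `T` in its equation is an equation of integral dependence of `x` over `J'`. Finally, a
valuation with `v(x) < v(J')` would satisfy `p·v(J') ≤ (p + c)·v(x)` for all `p`, which fails for
`p = c·v(x) + 1`.
-/

theorem mem_intClosure_of_sum_eq_zero {B : Type*} [CommRing B] {J : Ideal B} {x : B} {d : ℕ}
    {c : ℕ → B} (hc : ∀ i, c i ∈ J ^ i) (hc₀ : c 0 = 1)
    (hsum : ∑ i ∈ Finset.range (d + 1), c i * x ^ (d - i) = 0) : x ∈ intClosure J := by
  rcases d with _ | e
  · have : Subsingleton B := subsingleton_of_zero_eq_one (by simpa [hc₀] using hsum.symm)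
    exact ⟨1, one_pos, c, hc, Subsingleton.elim _ _⟩
  · refine ⟨e + 1, e.succ_pos, c, hc, ?_⟩
    rwa [Finset.sum_range_succ', hc₀, one_mul, Nat.sub_zero, add_comm] at hsum

namespace Ideal

open Polynomial

variable {B : Type*} [CommRing B] {J I : Ideal B} {c : ℕ}

theorem pow_add_le_pow_of_mul_eq_mul {K : Ideal B} (hK : I ^ c ≤ K) (hJK : J * K = I * K)
    (p : ℕ) : I ^ (p + c) ≤ J ^ p := by
  have hpow : I ^ p * K = J ^ p * K := by
    induction p with
    | zero => simp
    | succ p ih => rw [pow_succ, pow_succ, mul_assoc, mul_assoc, ← hJK, mul_left_comm, ih,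
        mul_left_comm]
  calc I ^ (p + c) = I ^ p * I ^ c := pow_add I p c
    _ ≤ I ^ p * K := mul_mono_right hK
    _ = J ^ p * K := hpow
    _ ≤ J ^ p := mul_le_left

def shiftedAdicFiltration (hJI : J ≤ I) (c : ℕ) : J.Filtration B where
  N p := I ^ (p + c)
  mono p := pow_le_pow_right (by omega)
  smul_le p := by
    rw [smul_eq_mul, add_right_comm, pow_succ']
    exact mul_mono_left hJI

theorem exists_mul_pow_eq_pow_succ_of_pow_add_le [IsNoetherianRing B] (hJI : J ≤ I)
    (hIJ : ∀ p, I ^ (p + c) ≤ J ^ p) : ∃ N, J * I ^ N = I ^ (N + 1) := by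
  have hstable : (shiftedAdicFiltration hJI c).Stable :=
    (J.stableFiltration_stable ⊤).of_le fun p =>
      show I ^ (p + c) ≤ J ^ p • ⊤ by rw [smul_eq_mul, mul_top]; exact hIJ p
  obtain ⟨p₀, hp₀⟩ := hstable
  exact ⟨p₀ + c, by simpa [shiftedAdicFiltration, add_right_comm] using hp₀ p₀ le_rfl⟩

theorem monomial_mem_span_X_pow (hIJ : ∀ p, I ^ (p + c) ≤ J ^ p) {i : ℕ} {r : B}
    (hr : r ∈ I ^ i) :
    monomial i r ∈ Submodule.span (reesAlgebra J) ((X ^ ·) '' Set.Iic c : Set B[X]) := by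
  have hr' : r ∈ J ^ (i - min i c) := by
    rcases le_total i c with hic | hci
    · simp [hic]
    · rw [min_eq_right hci]
      exact hIJ _ (by rwa [Nat.sub_add_cancel hci])
  have hsplit : monomial i r =
      (⟨monomial (i - min i c) r, reesAlgebra.monomial_mem.mpr hr'⟩ : reesAlgebra J) •
        (X : B[X]) ^ min i c := by
    rw [Subalgebra.smul_def, smul_eq_mul, X_pow_eq_monomial, monomial_mul_monomial, mul_one,
      Nat.sub_add_cancel (min_le_left i c)]
  rw [hsplit]
  exact Submodule.smul_mem _ _ (Submodule.subset_span ⟨_, min_le_right i c, rfl⟩)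

theorem isIntegral_monomial_one_of_pow_add_le [IsNoetherianRing B]
    (hIJ : ∀ p, I ^ (p + c) ≤ J ^ p) {x : B} (hx : x ∈ I) :
    IsIntegral (reesAlgebra J) (monomial 1 x : B[X]) := by
  refine .of_mem_of_fg (Algebra.adjoin (reesAlgebra J) {monomial 1 x}) ?_ _
    (Algebra.subset_adjoin rfl)
  refine (Submodule.fg_span ((Set.finite_Iic c).image fun j => (X : B[X]) ^ j)).of_le ?_
  rw [Algebra.adjoin_eq_span, Submodule.span_le]
  rintro _ hz
  obtain ⟨j, rfl⟩ := Submonoid.mem_closure_singleton.mp hz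
  rw [monomial_pow, one_mul]
  exact monomial_mem_span_X_pow hIJ (pow_mem_pow hx j)

theorem mem_intClosure_of_isIntegral_monomial_one {x : B}
    (hx : IsIntegral (reesAlgebra J) (monomial 1 x : B[X])) : x ∈ intClosure J := by
  obtain ⟨p, hmonic, hp⟩ := hx
  set d := p.natDegree
  have hcoeff : ∀ i ∈ Finset.range (d + 1),
      (algebraMap (reesAlgebra J) B[X] (p.coeff i) * monomial 1 x ^ i).coeff d =
        (p.coeff i : B[X]).coeff (d - i) * x ^ i := by
    intro i hi
    rw [monomial_pow, one_mul, ← coeff_mul_monomial, Nat.sub_add_cancel (by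
      simpa [Nat.lt_succ_iff] using hi)]
    rfl
  have hsum := congrArg (coeff · d) hp
  simp only [eval₂_eq_sum_range, finsetSum_coeff, coeff_zero] at hsum
  rw [Finset.sum_congr rfl hcoeff] at hsum
  refine mem_intClosure_of_sum_eq_zero (d := d) (c := fun i => (p.coeff (d - i) : B[X]).coeff i)
    (fun i => (p.coeff (d - i)).2 i) ?_ ?_
  · rw [Nat.sub_zero, hmonic.coeff_natDegree, OneMemClass.coe_one, coeff_one_zero]
  · rw [← hsum, ← Finset.sum_range_reflect]
    refine Finset.sum_congr rfl fun i hi => ?_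
    have : i ≤ d := Nat.lt_succ_iff.mp (Finset.mem_range.mp hi)
    simp only [Nat.add_sub_cancel, Nat.sub_sub_self this]

end Ideal

namespace AddValuation

variable {R : Type*} [CommRing R] (v : AddValuation R ℕ∞)

theorem nsmul_le_of_mem_pow {J : Ideal R} {a : ℕ∞} (ha : ∀ y ∈ J, a ≤ v y) {p : ℕ} {y : R}
    (hy : y ∈ J ^ p) : p • a ≤ v y := by
  induction p generalizing y with
  | zero => simp
  | succ p ih =>
    rw [pow_succ] at hy
    refine Submodule.mul_induction_on hy (fun y hy z hz => ?_) fun y z hy hz => ?_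
    · rw [succ_nsmul, map_mul]
      exact add_le_add (ih hy) (ha z hz)
    · exact (le_min hy hz).trans (v.map_add y z)

theorem biInf_eq_of_pow_add_le {J I : Ideal R} {c : ℕ} (hJI : J ≤ I)
    (hIJ : ∀ p, I ^ (p + c) ≤ J ^ p) : ⨅ x ∈ J, v x = ⨅ x ∈ I, v x := by
  refine le_antisymm (le_iInf₂ fun x hx => ?_) (biInf_mono hJI)
  by_contra! hlt
  lift v x to ℕ using hlt.ne_top with n hn
  set p := c * n + 1
  have hpow : p • (n + 1 : ℕ∞) ≤ (p + c) • (n : ℕ∞) :=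
    calc p • (n + 1 : ℕ∞) ≤ p • ⨅ y ∈ J, v y :=
          nsmul_le_nsmul_right (ENat.natCast_add_one_le_iff.mpr hlt) p
      _ ≤ v (x ^ (p + c)) := v.nsmul_le_of_mem_pow (fun y hy => iInf₂_le y hy)
          (hIJ p (Ideal.pow_mem_pow hx _))
      _ = (p + c) • (n : ℕ∞) := by rw [map_pow, ← hn]
  have : p * (n + 1) ≤ (p + c) * n := by
    simp only [nsmul_eq_mul] at hpow
    exact_mod_cast hpow
  nlinarith [show p = c * n + 1 from rfl]

end AddValuation

theorem stmt_9_general {A : Type*} [CommRing A] [IsLocalRing A] [IsNoetherianRing A]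
    (I : Ideal A) (hI : I.radical = maximalIdeal A)
    (n : ℕ) (hn : 0 < n) (g : Fin n → A) (hg : ∀ i, g i ∈ I)
    (h : A)
    (hjr : ∃ k : ℕ, 0 < k ∧
      (Ideal.span (Set.range g) * I ^ (n - 1) * maximalIdeal A +
          Ideal.span {h} * I ^ n) * (I ^ n * maximalIdeal A) ^ k =
        I ^ (n * (k + 1)) * (maximalIdeal A) ^ (k + 1)) :
    (Ideal.span (Set.range g)).map (Ideal.Quotient.mk (Ideal.span {h})) ≤
        I.map (Ideal.Quotient.mk (Ideal.span {h})) ∧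
    (∃ k : ℕ,
      (Ideal.span (Set.range g)).map (Ideal.Quotient.mk (Ideal.span {h})) *
          (I.map (Ideal.Quotient.mk (Ideal.span {h}))) ^ k =
        (I.map (Ideal.Quotient.mk (Ideal.span {h}))) ^ (k + 1)) ∧
    (∀ x ∈ I.map (Ideal.Quotient.mk (Ideal.span {h})),
      x ∈ intClosure ((Ideal.span (Set.range g)).map (Ideal.Quotient.mk (Ideal.span {h})))) ∧
    (∀ v : AddValuation (A ⧸ Ideal.span {h}) ℕ∞,
      (⨅ x ∈ (Ideal.span (Set.range g)).map (Ideal.Quotient.mk (Ideal.span {h})), v x) =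
        ⨅ x ∈ I.map (Ideal.Quotient.mk (Ideal.span {h})), v x) := by
  obtain ⟨k, -, hjr⟩ := hjr
  obtain ⟨n, rfl⟩ : ∃ n', n = n' + 1 := ⟨n - 1, by omega⟩
  set π := Ideal.Quotient.mk (Ideal.span {h})
  set J' := (Ideal.span (Set.range g)).map π
  set I' := I.map π
  set m' := (maximalIdeal A).map π
  have hJI : J' ≤ I' := Ideal.map_mono (Ideal.span_le.mpr (Set.range_subset_iff.mpr hg))
  have hIm : I' ≤ m' := Ideal.map_mono (hI ▸ Ideal.le_radical)
  have hjr' :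
      J' * I' ^ n * m' * (I' ^ (n + 1) * m') ^ k = I' ^ ((n + 1) * (k + 1)) * m' ^ (k + 1) := by
    simpa [J', I', m', Ideal.map_mul, Ideal.map_pow, Ideal.add_eq_sup, Ideal.map_sup,
      Ideal.map_quotient_self, π] using congrArg (Ideal.map π) hjr
  set K := I' ^ n * m' * (I' ^ (n + 1) * m') ^ k
  have hJK : J' * K = I' * K :=
    calc J' * K = J' * I' ^ n * m' * (I' ^ (n + 1) * m') ^ k := by ring
      _ = I' ^ ((n + 1) * (k + 1)) * m' ^ (k + 1) := hjr'
      _ = I' * K := by ring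
  have hIK : I' ^ (n + 1 + (n + 2) * k) ≤ K :=
    calc I' ^ (n + 1 + (n + 2) * k) = I' ^ n * I' * (I' ^ (n + 1) * I') ^ k := by ring
      _ ≤ I' ^ n * m' * (I' ^ (n + 1) * m') ^ k := by gcongr
  have hIJ := Ideal.pow_add_le_pow_of_mul_eq_mul hIK hJK
  exact ⟨hJI, Ideal.exists_mul_pow_eq_pow_succ_of_pow_add_le hJI hIJ,
    fun x hx => Ideal.mem_intClosure_of_isIntegral_monomial_one
      (Ideal.isIntegral_monomial_one_of_pow_add_le hIJ hx),
    fun v => v.biInf_eq_of_pow_add_le hJI hIJ⟩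

/-- Let `(A, m)` be a Noetherian local ring, `I` an `m`-primary ideal,
`g₁,…,g_n ∈ I`, `h ∈ m` such that `(g₁,…,g_n,h)` is a joint reduction of `I^{[n]}, m`. In
`A' = A/(h)`, set `J' = (g₁,…,g_n)A'` and `I' = I·A'`. Then `J'` is a reduction of `I'`
(`J' ⊆ I' ⊆ J̄'`, equivalently `J'·I'^k = I'^{k+1}` for some `k`), and every rank-one
discrete valuation `v` on `A'` (nonnegative, i.e. with values in `ℕ∞`) satisfies
`v(J') = v(I')`. -/
theorem stmt_9 {A : Type*} [CommRing A] [IsLocalRing A] [IsNoetherianRing A]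
    (I : Ideal A) (hI : I.radical = maximalIdeal A)
    (n : ℕ) (hn : 0 < n) (g : Fin n → A) (hg : ∀ i, g i ∈ I)
    (h : A) (hh : h ∈ maximalIdeal A)
    (hjr : ∃ k : ℕ, 0 < k ∧
      (Ideal.span (Set.range g) * I ^ (n - 1) * maximalIdeal A +
          Ideal.span {h} * I ^ n) * (I ^ n * maximalIdeal A) ^ k =
        I ^ (n * (k + 1)) * (maximalIdeal A) ^ (k + 1)) :
    (Ideal.span (Set.range g)).map (Ideal.Quotient.mk (Ideal.span {h})) ≤
        I.map (Ideal.Quotient.mk (Ideal.span {h})) ∧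
    (∃ k : ℕ,
      (Ideal.span (Set.range g)).map (Ideal.Quotient.mk (Ideal.span {h})) *
          (I.map (Ideal.Quotient.mk (Ideal.span {h}))) ^ k =
        (I.map (Ideal.Quotient.mk (Ideal.span {h}))) ^ (k + 1)) ∧
    (∀ x ∈ I.map (Ideal.Quotient.mk (Ideal.span {h})),
      x ∈ intClosure ((Ideal.span (Set.range g)).map (Ideal.Quotient.mk (Ideal.span {h})))) ∧
    (∀ v : AddValuation (A ⧸ Ideal.span {h}) ℕ∞,
      (⨅ x ∈ (Ideal.span (Set.range g)).map (Ideal.Quotient.mk (Ideal.span {h})), v x) =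
        ⨅ x ∈ I.map (Ideal.Quotient.mk (Ideal.span {h})), v x) :=
  stmt_9_general I hI n hn g hg h hjr
end

section
/- Let k be a field, A = (A_1,…,A_n) indeterminates, and let G_1,…,G_n be nonzero elements of k[A][[X_1,…,X_n]]. Let 𝔞 ⊂ k[A][[X_1,…,X_n]] be the ideal generated by G_1,…,G_n and Δ ⊂ ℕ^n its diagram of initial exponents. For a ∈ k^n, let J'_a ⊂ k[[X_1,…,X_n]] be the ideal generated by the evaluations G_i(a,X) and Δ_a its diagram of initial exponents. Then: (1) for every a ∈ k^n, Δ ≤ Δ_a in the total order on translation-stable subsets of ℕ^n; (2) there exist Q_1,…,Q_l ∈ k[A] such that Γ = {a ∈ k^n : Q_1(a)⋯Q_l(a) = 0} is a proper algebraic subset of k^n and: (a) for every a ∈ W_2 = k^n − Γ, Δ = Δ_a; (b) if β^1,…,β^l denote the vertices of Δ, there exist R_i ∈ 𝔞 (1 ≤ i ≤ l) such that for every a ∈ W_2, ν(R_i(A,X)) = ν(R_i(a,X)) = β^i. -/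
/-!
Evaluation at `a` never lowers initial exponents, and every element of the evaluated ideal
`J_a` lifts to `𝔞`. The heart of the proof is that an element of `J_a` with initial exponent `δ`
has a lift `F ∈ 𝔞` with `ν(F) = ν(F(a,X)) = δ` as soon as the vertices of `Δ` below `δ` lie in
`Δ_a`: among lifts take one whose initial exponent `γ ≤ δ` is maximal; if `γ < δ`, then `γ` lies
above a vertex `v < δ` of `Δ`, which by induction has such a lift `H`, and
`H_v F - X^{γ-v} F_γ H` (subscripts denoting coefficients) is a lift with a larger initial
exponent, because `F_γ` vanishes at `a` while `H_v` does not.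

Comparing `Δ` and `Δ_a` at their first differing vertex gives (1). For (2), choose `Rᵢ ∈ 𝔞`
with initial exponents the vertices `βⁱ` of `Δ` and let `Qᵢ` be their leading coefficients:
where no `Qᵢ` vanishes, all vertices of `Δ` lie in `Δ_a`, which forces `Δ = Δ_a`; and since `k`
is infinite, some `a` avoids all zeros of the `Qᵢ`.
-/

noncomputable section

/-- The diagram of initial exponents `Δ_J = {ν(g) : g ∈ J, g ≠ 0}` of an ideal of the
power series ring. -/
def diagram {n : ℕ} {R : Type*} [CommRing R] (J : Ideal (MvPowerSeries (Fin n) R)) :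
    Set (Fin n →₀ ℕ) :=
  {β | ∃ g ∈ J, hasInitExp g β}

/-- `β` is a vertex of a translation-stable subset `N` of `ℕ^n`. -/
def IsVertex {n : ℕ} (N : Set (Fin n →₀ ℕ)) (β : Fin n →₀ ℕ) : Prop :=
  β ∈ N ∧ ∀ α ∈ N, (∃ γ, β = α + γ) → α = β

/-- The total order on translation-stable subsets of `ℕ^n`, comparing the increasing
sequences of vertices lexicographically (padded with `∞`): `N₁ ≤ N₂` iff they are equal or
`N₁` has a vertex `β` which is not a vertex of `N₂` while their vertices below `β`
coincide. -/
def diagramLE {n : ℕ} (N₁ N₂ : Set (Fin n →₀ ℕ)) : Prop :=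
  N₁ = N₂ ∨ ∃ β, IsVertex N₁ β ∧ ¬IsVertex N₂ β ∧
    ∀ γ, degLt γ β → (IsVertex N₁ γ ↔ IsVertex N₂ γ)

namespace MvPolynomial

theorem exists_forall_eval_ne_zero {σ K ι : Type*} [CommRing K] [IsDomain K] [Infinite K]
    [Fintype ι] {Q : ι → MvPolynomial σ K} (hQ : ∀ i, Q i ≠ 0) :
    ∃ a : σ → K, ∀ i, eval a (Q i) ≠ 0 := by
  have hprod : ∏ i, Q i ≠ 0 := Finset.prod_ne_zero_iff.2 fun i _ => hQ i
  obtain ⟨a, ha⟩ := not_forall.1 fun h => hprod (funext fun a => by simpa using h a)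
  exact ⟨a, fun i => Finset.prod_ne_zero_iff.1 (by simpa using ha) i (Finset.mem_univ i)⟩

end MvPolynomial

namespace MvPowerSeries

theorem map_surjective {σ R S : Type*} [Semiring R] [Semiring S] {φ : R →+* S}
    (hφ : Function.Surjective φ) :
    Function.Surjective (map (σ := σ) φ) :=
  fun f => ⟨fun γ => Function.surjInv hφ (coeff γ f), by ext γ; exact Function.surjInv_eq hφ _⟩

end MvPowerSeries

open Finsupp MvPowerSeries

section InitialExponents

variable {n : ℕ}

section Order

theorem degLt_iff_toDegLex_lt {α β : Fin n →₀ ℕ} : degLt α β ↔ toDegLex α < toDegLex β := by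
  simp only [DegLex.lt_iff, ofDegLex_toDegLex, degree_eq_sum, Lex.lt_iff, ofLex_toLex]
  rfl

theorem not_degLt_iff {α β : Fin n →₀ ℕ} : ¬ degLt α β ↔ toDegLex β ≤ toDegLex α := by
  rw [degLt_iff_toDegLex_lt, not_lt]

theorem degLt_wellFounded : WellFounded (degLt (n := n)) :=
  Subrelation.wf degLt_iff_toDegLex_lt.1 (InvImage.wf toDegLex wellFounded_lt)

theorem degLt_add_right_iff {α β γ : Fin n →₀ ℕ} : degLt (α + γ) (β + γ) ↔ degLt α β := by
  simp only [degLt_iff_toDegLex_lt, toDegLex_add, add_lt_add_iff_right]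

theorem degLt_of_lt {α β : Fin n →₀ ℕ} (h : α < β) : degLt α β := by
  obtain ⟨γ, rfl⟩ := le_iff_exists_add.1 h.le
  have hγ0 : γ ≠ 0 := by rintro rfl; exact h.ne (add_zero α).symm
  have hγ : (0 : DegLex (Fin n →₀ ℕ)) < toDegLex γ :=
    lt_of_le_of_ne bot_le fun h0 => hγ0 (toDegLex_inj.1 h0.symm)
  rw [degLt_iff_toDegLex_lt, toDegLex_add]
  simpa using add_lt_add_left hγ (toDegLex α)

theorem degLt_trans {α β γ : Fin n →₀ ℕ} (hαβ : degLt α β) (hβγ : degLt β γ) : degLt α γ :=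
  degLt_iff_toDegLex_lt.2 ((degLt_iff_toDegLex_lt.1 hαβ).trans (degLt_iff_toDegLex_lt.1 hβγ))

theorem degLt_of_not_degLt_of_ne {α β : Fin n →₀ ℕ} (h : ¬ degLt α β) (hne : α ≠ β) :
    degLt β α :=
  degLt_iff_toDegLex_lt.2 ((not_degLt_iff.1 h).lt_of_ne fun h' => hne (toDegLex_inj.1 h').symm)

theorem degLt_of_le_of_degLt {α β γ : Fin n →₀ ℕ} (hαβ : α ≤ β) (hβγ : degLt β γ) :
    degLt α γ := by
  rcases hαβ.lt_or_eq with h | rfl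
  · exact degLt_trans (degLt_of_lt h) hβγ
  · exact hβγ

theorem finite_setOf_not_degLt (δ : Fin n →₀ ℕ) : {γ | ¬ degLt δ γ}.Finite :=
  (finite_of_degree_le (ofDegLex (toDegLex δ)).degree).subset fun _ h =>
    DegLex.monotone_degree (not_degLt_iff.1 h)

end Order

section InitExp

variable {R S : Type*} [CommRing R] [CommRing S]

theorem exists_hasInitExp {f : MvPowerSeries (Fin n) R} (hf : f ≠ 0) : ∃ β, hasInitExp f β := by
  obtain ⟨β, hβ, hmin⟩ := degLt_wellFounded.has_min {γ | coeff γ f ≠ 0}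
    (by simpa [Set.nonempty_def, ← not_forall] using fun h => hf (ext h))
  exact ⟨β, hβ, fun γ hγ => by_contra fun h => hmin γ h hγ⟩

theorem not_degLt_of_hasInitExp_map {φ : R →+* S} {F : MvPowerSeries (Fin n) R}
    {β δ : Fin n →₀ ℕ} (hF : hasInitExp F β) (hδ : hasInitExp (map φ F) δ) : ¬ degLt δ β :=
  fun h => hδ.1 (by rw [coeff_map, hF.2 δ h, map_zero])

theorem hasInitExp_map {φ : R →+* S} {F : MvPowerSeries (Fin n) R} {β : Fin n →₀ ℕ}
    (hF : hasInitExp F β) (hβ : φ (coeff β F) ≠ 0) : hasInitExp (map φ F) β :=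
  ⟨by rwa [coeff_map], fun γ hγ => by rw [coeff_map, hF.2 γ hγ, map_zero]⟩

theorem hasInitExp_C_mul [NoZeroDivisors R] {f : MvPowerSeries (Fin n) R} {β : Fin n →₀ ℕ}
    {c : R} (hc : c ≠ 0) (hf : hasInitExp f β) : hasInitExp (C c * f) β :=
  ⟨by rw [coeff_C_mul]; exact mul_ne_zero hc hf.1,
    fun γ hγ => by rw [coeff_C_mul, hf.2 γ hγ, mul_zero]⟩

theorem coeff_monomial_mul_eq_zero_of_degLt {H : MvPowerSeries (Fin n) R} {β γ δ : Fin n →₀ ℕ}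
    (hH : ∀ η, degLt η β → coeff η H = 0) (e : R) (hδ : degLt δ (β + γ)) :
    coeff δ (monomial γ e * H) = 0 := by
  rw [coeff_monomial_mul]
  split_ifs with hle
  · rw [← tsub_add_cancel_of_le hle, degLt_add_right_iff] at hδ
    rw [hH _ hδ, mul_zero]
  · rfl

theorem hasInitExp_monomial_mul {H : MvPowerSeries (Fin n) R} {β : Fin n →₀ ℕ}
    (hH : hasInitExp H β) (γ : Fin n →₀ ℕ) : hasInitExp (monomial γ 1 * H) (β + γ) :=
  ⟨by rw [coeff_monomial_mul, if_pos le_add_self, add_tsub_cancel_right, one_mul]; exact hH.1,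
    fun _ hδ => coeff_monomial_mul_eq_zero_of_degLt hH.2 1 hδ⟩

end InitExp

section Vertices

theorem isVertex_iff_minimal {N : Set (Fin n →₀ ℕ)} {β : Fin n →₀ ℕ} :
    IsVertex N β ↔ Minimal (· ∈ N) β := by
  simp only [IsVertex, minimal_iff, le_iff_exists_add, eq_comm (a := β)]

theorem exists_isVertex_le {N : Set (Fin n →₀ ℕ)} {α : Fin n →₀ ℕ} (hα : α ∈ N) :
    ∃ v ≤ α, IsVertex N v := by
  simpa only [isVertex_iff_minimal] using exists_minimal_le_of_wellFoundedLT (· ∈ N) α hα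

theorem finite_setOf_isVertex (N : Set (Fin n →₀ ℕ)) : {β | IsVertex N β}.Finite :=
  WellQuasiOrderedLE.finite_of_isAntichain fun _ ha _ hb hne hle =>
    hne ((isVertex_iff_minimal.1 hb).eq_of_le (isVertex_iff_minimal.1 ha).1 hle)

theorem subset_of_forall_isVertex_mem {N M : Set (Fin n →₀ ℕ)} (hM : IsUpperSet M)
    (h : ∀ v, IsVertex N v → v ∈ M) : N ⊆ M := fun _ hα =>
  let ⟨v, hvα, hv⟩ := exists_isVertex_le hα
  hM hvα (h v hv)

theorem diagramLE_of_forall_isVertex {N M : Set (Fin n →₀ ℕ)} (hN : IsUpperSet N)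
    (hM : IsUpperSet M)
    (h : ∀ β, IsVertex M β → (∀ γ, degLt γ β → (IsVertex N γ ↔ IsVertex M γ)) → β ∈ N) :
    diagramLE N M := by
  by_cases hNM : ∀ β, IsVertex N β ↔ IsVertex M β
  · exact Or.inl <| (subset_of_forall_isVertex_mem hM fun v hv => ((hNM v).1 hv).1).antisymm
      (subset_of_forall_isVertex_mem hN fun v hv => ((hNM v).2 hv).1)
  rw [not_forall] at hNM
  obtain ⟨β, hβ, hmin⟩ := degLt_wellFounded.has_min {β | ¬ (IsVertex N β ↔ IsVertex M β)} hNM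
  have hbelow : ∀ γ, degLt γ β → (IsVertex N γ ↔ IsVertex M γ) :=
    fun γ hγ => by_contra fun h' => hmin γ h' hγ
  by_cases hβN : IsVertex N β
  · exact Or.inr ⟨β, hβN, fun hβM => hβ (iff_of_true hβN hβM), hbelow⟩
  -- `β` is a vertex of `M` only; it lies in `N` by `h`, so above a smaller vertex of `N`,
  -- which is then a vertex of `M` below `β`.
  have hβM : IsVertex M β := by_contra fun hβM => hβ (iff_of_false hβN hβM)
  obtain ⟨v, hvβ, hv⟩ := exists_isVertex_le (h β hβM hbelow)
  have hvβ' : v < β := lt_of_le_of_ne hvβ fun hvβ => hβN (hvβ ▸ hv)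
  exact absurd ((isVertex_iff_minimal.1 hβM).eq_of_le ((hbelow v (degLt_of_lt hvβ')).1 hv).1
    hvβ) hvβ'.ne

end Vertices

section Lifting

variable {R S : Type*} [CommRing R] [CommRing S] {I : Ideal (MvPowerSeries (Fin n) R)}

theorem isUpperSet_diagram (I : Ideal (MvPowerSeries (Fin n) R)) : IsUpperSet (diagram I) := by
  rintro α β hαβ ⟨g, hg, hgα⟩
  obtain ⟨γ, rfl⟩ := le_iff_exists_add.1 hαβ
  exact ⟨monomial γ 1 * g, I.mul_mem_left _ hg, hasInitExp_monomial_mul hgα γ⟩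

theorem coeff_C_mul_sub_monomial_mul_eq_zero {F H : MvPowerSeries (Fin n) R}
    {γ v η : Fin n →₀ ℕ} (hF : hasInitExp F γ) (hH : hasInitExp H v) (hvγ : v ≤ γ)
    (hη : ¬ degLt γ η) :
    coeff η (C (coeff v H) * F - monomial (γ - v) (coeff γ F) * H) = 0 := by
  rcases eq_or_ne η γ with rfl | hne
  · rw [map_sub, coeff_C_mul, coeff_monomial_mul, if_pos tsub_le_self,
      tsub_tsub_cancel_of_le hvγ, mul_comm, sub_self]
  · have hηγ : degLt η (v + (γ - v)) := by
      rw [add_tsub_cancel_of_le hvγ]; exact degLt_of_not_degLt_of_ne hη hne.symm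
    rw [map_sub, coeff_C_mul, hF.2 η (by rwa [add_tsub_cancel_of_le hvγ] at hηγ),
      coeff_monomial_mul_eq_zero_of_degLt hH.2 _ hηγ, mul_zero, sub_zero]

variable [NoZeroDivisors S] {φ : R →+* S}

theorem exists_hasInitExp_gt {F H : MvPowerSeries (Fin n) R} {γ δ v : Fin n →₀ ℕ}
    (hFI : F ∈ I) (hFγ : hasInitExp F γ) (hFδ : hasInitExp (map φ F) δ) (hγδ : degLt γ δ)
    (hHI : H ∈ I) (hHv : hasInitExp H v) (hHv' : hasInitExp (map φ H) v) (hvγ : v ≤ γ) :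
    ∃ F' ∈ I, ∃ ρ, degLt γ ρ ∧ hasInitExp F' ρ ∧ hasInitExp (map φ F') δ := by
  set F' := C (coeff v H) * F - monomial (γ - v) (coeff γ F) * H
  have hF'I : F' ∈ I := I.sub_mem (I.mul_mem_left _ hFI) (I.mul_mem_left _ hHI)
  have hmap : map φ F' = C (φ (coeff v H)) * map φ F := by
    have hγ : φ (coeff γ F) = 0 := by rw [← coeff_map, hFδ.2 γ hγδ]
    simp only [F', map_sub, map_mul, map_C, map_monomial, hγ, map_zero, zero_mul, sub_zero]
  have hF'δ : hasInitExp (map φ F') δ :=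
    hmap ▸ hasInitExp_C_mul (by simpa only [coeff_map] using hHv'.1) hFδ
  obtain ⟨ρ, hρ⟩ := exists_hasInitExp (f := F') fun h => hF'δ.1 (by rw [h, map_zero, map_zero])
  exact ⟨F', hF'I, ρ, by_contra fun hγρ =>
    hρ.1 (coeff_C_mul_sub_monomial_mul_eq_zero hFγ hHv hvγ hγρ), hρ, hF'δ⟩

theorem exists_lift_hasInitExp (hφ : Function.Surjective φ) {δ : Fin n →₀ ℕ}
    (hδ : ∀ v, IsVertex (diagram I) v → degLt v δ → v ∈ diagram (I.map (map φ)))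
    (hδJ : δ ∈ diagram (I.map (map φ))) :
    ∃ F ∈ I, hasInitExp F δ ∧ hasInitExp (map φ F) δ := by
  induction δ using degLt_wellFounded.induction with
  | _ δ ih =>
  obtain ⟨_, hfJ, hfδ⟩ := hδJ
  obtain ⟨F₀, hF₀I, rfl⟩ := (Ideal.mem_map_iff_of_surjective _ (map_surjective hφ)).1 hfJ
  obtain ⟨γ₀, hγ₀⟩ := exists_hasInitExp (f := F₀) fun h => hfδ.1 (by rw [h, map_zero, map_zero])
  set T := {γ | ∃ F ∈ I, hasInitExp F γ ∧ hasInitExp (map φ F) δ}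
  have hT : T ⊆ {γ | ¬ degLt δ γ} := fun _ ⟨_, _, hFγ, hFδ⟩ =>
    not_degLt_of_hasInitExp_map hFγ hFδ
  obtain ⟨γ, hγT, hmax⟩ := Set.exists_max_image T toDegLex
    ((finite_setOf_not_degLt δ).subset hT) ⟨γ₀, (⟨F₀, hF₀I, hγ₀, hfδ⟩ : γ₀ ∈ T)⟩
  rcases eq_or_ne γ δ with rfl | hγδ
  · exact hγT
  have hγδ' : degLt γ δ := degLt_of_not_degLt_of_ne (hT hγT) hγδ.symm
  obtain ⟨F, hFI, hFγ, hFδ⟩ := hγT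
  obtain ⟨v, hvγ, hv⟩ := exists_isVertex_le (N := diagram I) ⟨F, hFI, hFγ⟩
  have hvδ : degLt v δ := degLt_of_le_of_degLt hvγ hγδ'
  obtain ⟨H, hHI, hHv, hHv'⟩ :=
    ih v hvδ (fun w hw hwv => hδ w hw (degLt_trans hwv hvδ)) (hδ v hv hvδ)
  obtain ⟨F', hF'I, ρ, hγρ, hρ, hF'δ⟩ := exists_hasInitExp_gt hFI hFγ hFδ hγδ' hHI hHv hHv' hvγ
  exact absurd (hmax ρ ⟨F', hF'I, hρ, hF'δ⟩) (not_le.2 (degLt_iff_toDegLex_lt.1 hγρ))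

theorem diagramLE_diagram_map (hφ : Function.Surjective φ) (I : Ideal (MvPowerSeries (Fin n) R)) :
    diagramLE (diagram I) (diagram (I.map (map φ))) :=
  diagramLE_of_forall_isVertex (isUpperSet_diagram I) (isUpperSet_diagram _) fun _ hβ hbelow =>
    let ⟨F, hFI, hFβ, _⟩ :=
      exists_lift_hasInitExp hφ (fun v hv hvβ => ((hbelow v hvβ).1 hv).1) hβ.1
    ⟨F, hFI, hFβ⟩

theorem diagram_eq_diagram_map (hφ : Function.Surjective φ)
    (h : ∀ v, IsVertex (diagram I) v → v ∈ diagram (I.map (map φ))) :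
    diagram I = diagram (I.map (map φ)) :=
  (subset_of_forall_isVertex_mem (isUpperSet_diagram _) h).antisymm fun _ hδ =>
    let ⟨F, hFI, hFδ, _⟩ := exists_lift_hasInitExp hφ (fun v hv _ => h v hv) hδ
    ⟨F, hFI, hFδ⟩

end Lifting

end InitialExponents

theorem stmt_10_general (k : Type*) [Field k] [CharZero k] (n : ℕ)
    (G : Fin n → MvPowerSeries (Fin n) (MvPolynomial (Fin n) k)) :
    (∀ a : Fin n → k,
      diagramLE (diagram (Ideal.span (Set.range G)))
        (diagram (Ideal.span (Set.range fun i =>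
          MvPowerSeries.map (σ := Fin n) (MvPolynomial.eval a) (G i))))) ∧
    ∃ (l : ℕ) (Q : Fin l → MvPolynomial (Fin n) k) (β : Fin l → (Fin n →₀ ℕ))
      (R : Fin l → MvPowerSeries (Fin n) (MvPolynomial (Fin n) k)),
      (∀ i, Q i ≠ 0) ∧
      {a : Fin n → k | ∃ i, MvPolynomial.eval a (Q i) = 0} ≠ Set.univ ∧
      (∀ γ, IsVertex (diagram (Ideal.span (Set.range G))) γ ↔ γ ∈ Set.range β) ∧
      (∀ i, R i ∈ Ideal.span (Set.range G)) ∧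
      ∀ a : Fin n → k, (∀ i, MvPolynomial.eval a (Q i) ≠ 0) →
        diagram (Ideal.span (Set.range G)) =
          diagram (Ideal.span (Set.range fun i =>
            MvPowerSeries.map (σ := Fin n) (MvPolynomial.eval a) (G i))) ∧
        ∀ i, hasInitExp (R i) (β i) ∧
          hasInitExp (MvPowerSeries.map (σ := Fin n) (MvPolynomial.eval a) (R i)) (β i) := by
  set I := Ideal.span (Set.range G)
  have hspan (a : Fin n → k) : Ideal.span (Set.range fun i => map (MvPolynomial.eval a) (G i)) =
      I.map (map (MvPolynomial.eval a)) := by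
    rw [Ideal.map_span, ← Set.range_comp]; rfl
  have heval (a : Fin n → k) : Function.Surjective (MvPolynomial.eval a) :=
    fun x => ⟨MvPolynomial.C x, MvPolynomial.eval_C x⟩
  simp only [hspan]
  refine ⟨fun a => diagramLE_diagram_map (heval a) I, ?_⟩
  obtain ⟨l, β, hβ⟩ := (finite_setOf_isVertex (diagram I)).fin_embedding
  have hβI (i : Fin l) : IsVertex (diagram I) (β i) := (Set.ext_iff.1 hβ (β i)).1 ⟨i, rfl⟩
  choose R hRI hRβ using fun i => (hβI i).1
  refine ⟨l, fun i => coeff (β i) (R i), β, R, fun i => (hRβ i).1, ?_, fun γ => by rw [hβ]; rfl,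
    hRI, fun a ha => ?_⟩
  · obtain ⟨a, ha⟩ := MvPolynomial.exists_forall_eval_ne_zero fun i => (hRβ i).1
    exact Set.ne_univ_iff_exists_notMem _ |>.2 ⟨a, fun ⟨i, hi⟩ => ha i hi⟩
  have hRa (i : Fin l) : hasInitExp (map (MvPolynomial.eval a) (R i)) (β i) :=
    hasInitExp_map (hRβ i) (ha i)
  refine ⟨diagram_eq_diagram_map (heval a) fun v hv => ?_, fun i => ⟨hRβ i, hRa i⟩⟩
  obtain ⟨i, rfl⟩ : v ∈ Set.range β := by rw [hβ]; exact hv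
  exact ⟨_, Ideal.mem_map_of_mem _ (hRI i), hRa i⟩

/-- Lemma 4.1, after Bierstone–Milman. Let `G₁,…,G_n` be nonzero
elements of `k[A][[X₁,…,X_n]]`, `𝔞` the ideal they generate with diagram `Δ`, and for
`a ∈ k^n` let `Δ_a` be the diagram of the ideal generated by the evaluations `Gᵢ(a,X)`.
Then (1) `Δ ≤ Δ_a` for all `a`; (2) there are nonzero `Q₁,…,Q_l ∈ k[A]` whose common
nonvanishing locus `W₂ = k^n − Γ` (with `Γ` a proper algebraic subset) satisfies:
(a) `Δ = Δ_a` for `a ∈ W₂`; (b) if `β¹,…,β^l` are the vertices of `Δ`, there are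
`Rᵢ ∈ 𝔞` with `ν(Rᵢ(A,X)) = ν(Rᵢ(a,X)) = βⁱ` for all `a ∈ W₂`. -/
theorem stmt_10 (k : Type*) [Field k] [CharZero k] (n : ℕ)
    (G : Fin n → MvPowerSeries (Fin n) (MvPolynomial (Fin n) k))
    (hG : ∀ i, G i ≠ 0) :
    (∀ a : Fin n → k,
      diagramLE (diagram (Ideal.span (Set.range G)))
        (diagram (Ideal.span (Set.range fun i =>
          MvPowerSeries.map (σ := Fin n) (MvPolynomial.eval a) (G i))))) ∧
    ∃ (l : ℕ) (Q : Fin l → MvPolynomial (Fin n) k) (β : Fin l → (Fin n →₀ ℕ))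
      (R : Fin l → MvPowerSeries (Fin n) (MvPolynomial (Fin n) k)),
      (∀ i, Q i ≠ 0) ∧
      {a : Fin n → k | ∃ i, MvPolynomial.eval a (Q i) = 0} ≠ Set.univ ∧
      (∀ γ, IsVertex (diagram (Ideal.span (Set.range G))) γ ↔ γ ∈ Set.range β) ∧
      (∀ i, R i ∈ Ideal.span (Set.range G)) ∧
      ∀ a : Fin n → k, (∀ i, MvPolynomial.eval a (Q i) ≠ 0) →
        diagram (Ideal.span (Set.range G)) =
          diagram (Ideal.span (Set.range fun i =>
            MvPowerSeries.map (σ := Fin n) (MvPolynomial.eval a) (G i))) ∧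
        ∀ i, hasInitExp (R i) (β i) ∧
          hasInitExp (MvPowerSeries.map (σ := Fin n) (MvPolynomial.eval a) (R i)) (β i) :=
  stmt_10_general k n G
end
end
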